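/- Let (X,T) be a uniquely ergodic topological dynamical system with unique invariant Borel probability measure μ, and assume (as is known) that for every x ∈ X and every continuous f : X → ℝ, lim_{N→∞} 𝔼_{1≤m,n≤N} f(T^{Ω(m²+n²)} x) = ∫_X f dμ. Then for every x ∈ X and every continuous f : X → ℝ, lim_{N→∞} 𝔼_{1≤m,n≤N, gcd(m,n)=1} f(T^{Ω(m²+n²)} x) = ∫_X f dμ. -/

import Mathlib

/-!
Möbius inversion over `gcd(m, n)` writes the coprime sum as `∑_{d ≤ N} μ(d) u_d(⌊N/d⌋)`, where
`u_d(M)` is the sum over `[1, M]²` of the dilated sequence `(a, b) ↦ g(da, db)`. Since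
`Ω((da)² + (db)²) = Ω(a² + b²) + 2 Ω(d)`, dilating by `d` amounts to starting the orbit at
`T^{2Ω(d)} x`, so the hypothesis gives `u_d(M) / M² → ∫ f dμ` for every `d`, and dominated
convergence in `d` gives `(∫ f dμ) · ∑ μ(d)/d²` as the limit of the coprime sum over `N²`. The case
`f = 1` counts the coprime pairs, and `∑ μ(d)/d² = 1/ζ(2) ≠ 0`.
-/

open Filter Finset Real MeasureTheory ArithmeticFunction
open scoped Topology ArithmeticFunction.Moebius

lemma Icc_filter_dvd_eq_image {d : ℕ} (hd : d ≠ 0) (N : ℕ) :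
    {m ∈ Icc 1 N | d ∣ m} = (Icc 1 (N / d)).image (d * ·) := by
  ext m
  simp only [mem_filter, mem_Icc, mem_image]
  constructor
  · rintro ⟨⟨hm1, hmN⟩, a, rfl⟩
    refine ⟨a, ⟨Nat.pos_of_mul_pos_left hm1, ?_⟩, rfl⟩
    rw [Nat.le_div_iff_mul_le (Nat.pos_of_ne_zero hd), mul_comm]
    exact hmN
  · rintro ⟨a, ⟨ha1, haN⟩, rfl⟩
    refine ⟨⟨Nat.mul_pos (Nat.pos_of_ne_zero hd) ha1, ?_⟩, dvd_mul_right d a⟩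
    exact (Nat.mul_le_mul_left d haN).trans (Nat.mul_div_le N d)

lemma sum_Icc_filter_dvd {M : Type*} [AddCommMonoid M] {d : ℕ} (hd : d ≠ 0) (N : ℕ)
    (h : ℕ → M) : ∑ m ∈ Icc 1 N with d ∣ m, h m = ∑ a ∈ Icc 1 (N / d), h (d * a) := by
  rw [Icc_filter_dvd_eq_image hd, sum_image fun a _ b _ hab => Nat.eq_of_mul_eq_mul_left
    (Nat.pos_of_ne_zero hd) hab]

lemma sum_divisors_moebius {R : Type*} [Ring R] (n : ℕ) :
    ∑ d ∈ n.divisors, (μ d : R) = if n = 1 then 1 else 0 := by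
  simpa using (coe_mul_zeta_apply (f := ((μ : ArithmeticFunction ℤ) : ArithmeticFunction R))
    (x := n)).symm.trans (by rw [coe_moebius_mul_coe_zeta, one_apply])

lemma cardFactors_mul_sq_add_mul_sq {d a b : ℕ} (hd : d ≠ 0) (hab : a ^ 2 + b ^ 2 ≠ 0) :
    cardFactors ((d * a) ^ 2 + (d * b) ^ 2) = cardFactors (a ^ 2 + b ^ 2) + 2 * cardFactors d := by
  rw [show (d * a) ^ 2 + (d * b) ^ 2 = d ^ 2 * (a ^ 2 + b ^ 2) by ring,
    cardFactors_mul (pow_ne_zero 2 hd) hab, cardFactors_pow, add_comm, mul_comm]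

lemma tendsto_natCast_div_div_self (d : ℕ) :
    Tendsto (fun N : ℕ => ((N / d : ℕ) : ℝ) / N) atTop (𝓝 (1 / d)) := by
  refine ((tendsto_nat_floor_mul_div_atTop (by positivity : (0 : ℝ) ≤ 1 / d)).comp
    tendsto_natCast_atTop_atTop).congr fun N => ?_
  simp only [Function.comp_apply, one_div_mul_eq_div, Nat.floor_div_eq_div]

lemma tsum_moebius_div_sq_ne_zero : ∑' d : ℕ, (μ d : ℝ) / (d : ℝ) ^ 2 ≠ 0 := by
  have hL : ((∑' d : ℕ, (μ d : ℝ) / (d : ℝ) ^ 2 : ℝ) : ℂ) = LSeries (fun n => (μ n : ℂ)) 2 := by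
    rw [Complex.ofReal_tsum, LSeries]
    congr 1 with d
    rcases eq_or_ne d 0 with rfl | hd
    · simp
    · simp [LSeries.term, hd]
  intro h0
  simpa [← hL, h0] using LSeries_one_mul_Lseries_moebius (s := 2) (by norm_num)

def coprimePairs (N : ℕ) : Finset (ℕ × ℕ) :=
  (Icc 1 N ×ˢ Icc 1 N).filter (fun p => Nat.gcd p.1 p.2 = 1)

lemma divisors_gcd_eq_filter {m N : ℕ} (hm : m ∈ Icc 1 N) (n : ℕ) :
    (Nat.gcd m n).divisors = {d ∈ Icc 1 N | d ∣ m ∧ d ∣ n} := by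
  rw [mem_Icc] at hm
  ext d
  simp only [mem_filter, mem_Icc, Nat.mem_divisors, Nat.dvd_gcd_iff]
  constructor
  · rintro ⟨⟨hdm, hdn⟩, -⟩
    exact ⟨⟨Nat.pos_of_dvd_of_pos hdm hm.1, (Nat.le_of_dvd hm.1 hdm).trans hm.2⟩, hdm, hdn⟩
  · rintro ⟨-, hdm, hdn⟩
    exact ⟨⟨hdm, hdn⟩, Nat.gcd_ne_zero_left (by omega)⟩

theorem sum_coprimePairs_eq_sum_moebius {R : Type*} [Ring R] (g : ℕ → ℕ → R) (N : ℕ) :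
    ∑ p ∈ coprimePairs N, g p.1 p.2
      = ∑ d ∈ Icc 1 N, (μ d : R) * ∑ a ∈ Icc 1 (N / d), ∑ b ∈ Icc 1 (N / d), g (d * a) (d * b) := by
  have hcoprime : ∀ p ∈ Icc 1 N ×ˢ Icc 1 N, (if Nat.gcd p.1 p.2 = 1 then g p.1 p.2 else 0)
      = ∑ d ∈ Icc 1 N, if d ∣ p.1 ∧ d ∣ p.2 then (μ d : R) * g p.1 p.2 else 0 := by
    rintro ⟨m, n⟩ hp
    rw [mem_product] at hp
    rw [← sum_filter, ← sum_mul, ← divisors_gcd_eq_filter hp.1 n, sum_divisors_moebius]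
    split_ifs <;> simp
  rw [coprimePairs, sum_filter, sum_congr rfl hcoprime, sum_comm]
  refine sum_congr rfl fun d hd => ?_
  have hd : d ≠ 0 := by rw [mem_Icc] at hd; omega
  rw [← sum_filter, filter_product (p := (d ∣ ·)) (q := (d ∣ ·)), sum_product, mul_sum,
    sum_Icc_filter_dvd hd]
  refine sum_congr rfl fun a _ => ?_
  rw [sum_Icc_filter_dvd hd, mul_sum]

lemma tendsto_div_sq_comp_natDiv {u : ℕ → ℝ} {L : ℝ}
    (hu : Tendsto (fun M : ℕ => u M / (M : ℝ) ^ 2) atTop (𝓝 L)) {d : ℕ} (hd : d ≠ 0) :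
    Tendsto (fun N : ℕ => u (N / d) / (N : ℝ) ^ 2) atTop (𝓝 (L / (d : ℝ) ^ 2)) := by
  have hlim := (hu.comp (Nat.tendsto_div_const_atTop hd)).mul
    ((tendsto_natCast_div_div_self d).pow 2)
  rw [one_div, inv_pow, ← div_eq_mul_inv] at hlim
  refine hlim.congr' ?_
  filter_upwards [eventually_ge_atTop d] with N hN
  have hNd : ((N / d : ℕ) : ℝ) ≠ 0 := by
    exact_mod_cast (Nat.div_pos hN (Nat.pos_of_ne_zero hd)).ne'
  have hN : (N : ℝ) ≠ 0 := by exact_mod_cast (hd.bot_lt.trans_le hN).ne'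
  simp only [Function.comp_apply]
  field_simp

lemma abs_div_sq_natDiv_le {v : ℕ → ℝ} {C : ℝ} (hv : ∀ M, |v M| ≤ C * (M : ℝ) ^ 2) (N d : ℕ) :
    |v (N / d) / (N : ℝ) ^ 2| ≤ C / (d : ℝ) ^ 2 := by
  have hC : 0 ≤ C := by simpa using (abs_nonneg _).trans (hv 1)
  rcases eq_or_ne d 0 with rfl | hd
  · have hv0 : v 0 = 0 := abs_nonpos_iff.1 (by simpa using hv 0)
    simp [hv0]
  rcases eq_or_ne N 0 with rfl | hN
  · simp [div_nonneg hC (sq_nonneg _)]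
  have hq : ((N / d : ℕ) : ℝ) / N ≤ 1 / d := by
    rw [div_le_div_iff₀ (by positivity) (by positivity), one_mul]
    exact_mod_cast Nat.div_mul_le_self N d
  calc |v (N / d) / (N : ℝ) ^ 2| ≤ C * ((N / d : ℕ) : ℝ) ^ 2 / (N : ℝ) ^ 2 := by
        rw [abs_div, abs_of_nonneg (by positivity : (0 : ℝ) ≤ (N : ℝ) ^ 2)]
        gcongr
        exact hv _
    _ = C * (((N / d : ℕ) : ℝ) / N) ^ 2 := by ring
    _ ≤ C * (1 / d) ^ 2 := by gcongr
    _ = C / (d : ℝ) ^ 2 := by ring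

theorem tendsto_sum_mul_natDiv_div_sq {c : ℕ → ℝ} {K : ℝ} (hc : ∀ d, |c d| ≤ K)
    {u : ℕ → ℕ → ℝ} {C L : ℝ} (hb : ∀ d M, |u d M| ≤ C * (M : ℝ) ^ 2)
    (hl : ∀ d ≠ 0, Tendsto (fun M : ℕ => u d M / (M : ℝ) ^ 2) atTop (𝓝 L)) :
    Tendsto (fun N : ℕ => (∑ d ∈ Icc 1 N, c d * u d (N / d)) / (N : ℝ) ^ 2) atTop
      (𝓝 (L * ∑' d : ℕ, c d / (d : ℝ) ^ 2)) := by
  have hzero : ∀ d, u d 0 = 0 := fun d => abs_nonpos_iff.1 (by simpa using hb d 0)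
  have hvanish : ∀ N d, d ∉ Icc 1 N → N / d = 0 := by
    intro N d hd
    rw [mem_Icc, not_and_or, not_le, not_le] at hd
    rcases hd with hd | hd
    · rw [Nat.lt_one_iff.1 hd, Nat.div_zero]
    · exact Nat.div_eq_of_lt hd
  have hsum : ∀ N : ℕ, (∑ d ∈ Icc 1 N, c d * u d (N / d)) / (N : ℝ) ^ 2
      = ∑' d, c d * (u d (N / d) / (N : ℝ) ^ 2) := by
    intro N
    rw [sum_div, tsum_eq_sum fun d hd => by simp [hvanish N d hd, hzero]]
    exact sum_congr rfl fun d _ => mul_div_assoc _ _ _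
  simp_rw [hsum, ← tsum_mul_left, mul_div_left_comm L]
  refine tendsto_tsum_of_dominated_convergence (bound := fun d => K * (C / (d : ℝ) ^ 2))
    ?_ (fun d => ?_) (Eventually.of_forall fun N d => ?_)
  · simpa [div_eq_mul_inv, mul_assoc] using
      (Real.summable_one_div_nat_pow.2 one_lt_two).mul_left (K * C)
  · rcases eq_or_ne d 0 with rfl | hd
    · simp [hzero]
    · exact (tendsto_div_sq_comp_natDiv (hl d hd) hd).const_mul (c d)
  · rw [Real.norm_eq_abs, abs_mul]
    exact mul_le_mul (hc d) (abs_div_sq_natDiv_le (hb d) N d) (abs_nonneg _)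
      ((abs_nonneg _).trans (hc d))

lemma abs_sum_Icc_sum_Icc_le {g : ℕ → ℕ → ℝ} {C : ℝ} (hg : ∀ m n, |g m n| ≤ C) (M : ℕ) :
    |∑ a ∈ Icc 1 M, ∑ b ∈ Icc 1 M, g a b| ≤ C * (M : ℝ) ^ 2 := by
  calc |∑ a ∈ Icc 1 M, ∑ b ∈ Icc 1 M, g a b| ≤ ∑ a ∈ Icc 1 M, ∑ b ∈ Icc 1 M, |g a b| :=
        (abs_sum_le_sum_abs _ _).trans (sum_le_sum fun a _ => abs_sum_le_sum_abs _ _)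
    _ ≤ ∑ a ∈ Icc 1 M, ∑ b ∈ Icc 1 M, C := by gcongr with a _ b _; exact hg a b
    _ = C * (M : ℝ) ^ 2 := by
      simp only [sum_const, Nat.card_Icc, Nat.add_sub_cancel, nsmul_eq_mul]; ring

theorem tendsto_sum_coprimePairs_div_sq {g : ℕ → ℕ → ℝ} {C L : ℝ} (hg : ∀ m n, |g m n| ≤ C)
    (hl : ∀ d ≠ 0, Tendsto (fun M : ℕ =>
      (∑ a ∈ Icc 1 M, ∑ b ∈ Icc 1 M, g (d * a) (d * b)) / (M : ℝ) ^ 2) atTop (𝓝 L)) :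
    Tendsto (fun N : ℕ => (∑ p ∈ coprimePairs N, g p.1 p.2) / (N : ℝ) ^ 2) atTop
      (𝓝 (L * ∑' d : ℕ, (μ d : ℝ) / (d : ℝ) ^ 2)) := by
  simp_rw [sum_coprimePairs_eq_sum_moebius]
  exact tendsto_sum_mul_natDiv_div_sq (c := fun d => (μ d : ℝ))
    (u := fun d M => ∑ a ∈ Icc 1 M, ∑ b ∈ Icc 1 M, g (d * a) (d * b))
    (K := 1) (fun d => by exact_mod_cast abs_moebius_le_one)
    (fun d => abs_sum_Icc_sum_Icc_le fun a b => hg (d * a) (d * b)) hl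

theorem tendsto_coprimePairs_average {g : ℕ → ℕ → ℝ} {C L : ℝ} (hg : ∀ m n, |g m n| ≤ C)
    (hl : ∀ d ≠ 0, Tendsto (fun M : ℕ =>
      (∑ a ∈ Icc 1 M, ∑ b ∈ Icc 1 M, g (d * a) (d * b)) / (M : ℝ) ^ 2) atTop (𝓝 L)) :
    Tendsto (fun N : ℕ => (∑ p ∈ coprimePairs N, g p.1 p.2) / (#(coprimePairs N) : ℝ)) atTop
      (𝓝 L) := by
  have hcount := tendsto_sum_coprimePairs_div_sq (g := fun _ _ => 1) (C := 1) (L := 1)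
    (by simp) fun d _ => tendsto_const_nhds.congr' <| by
      filter_upwards [eventually_ne_atTop 0] with M hM
      rw [eq_div_iff (by positivity)]
      simp [sq]
  have hκ := tsum_moebius_div_sq_ne_zero
  have hlim := (tendsto_sum_coprimePairs_div_sq hg hl).div hcount (by simpa using hκ)
  rw [one_mul, mul_div_cancel_right₀ _ hκ] at hlim
  refine hlim.congr' ?_
  filter_upwards [eventually_ne_atTop 0] with N hN
  rw [Pi.div_apply, div_div_div_cancel_right₀ (by positivity), sum_const, nsmul_one]

theorem stmt8_general {X : Type*} [MetricSpace X] [CompactSpace X]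
    [MeasurableSpace X]
    (T : X → X)
    (mu : Measure X)
    (hknown : ∀ (x : X) (f : X → ℝ), Continuous f →
      Tendsto (fun N : ℕ =>
          (∑ m ∈ Finset.Icc 1 N, ∑ n ∈ Finset.Icc 1 N,
            f (T^[cardFactors (m ^ 2 + n ^ 2)] x)) / (N : ℝ) ^ 2)
        atTop (nhds (∫ y, f y ∂mu)))
    (x : X) (f : X → ℝ) (hf : Continuous f) :
    Tendsto (fun N : ℕ =>
        (∑ p ∈ (Finset.Icc 1 N ×ˢ Finset.Icc 1 N).filter (fun p => Nat.gcd p.1 p.2 = 1),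
            f (T^[cardFactors (p.1 ^ 2 + p.2 ^ 2)] x)) /
          (((Finset.Icc 1 N ×ˢ Finset.Icc 1 N).filter
              (fun p => Nat.gcd p.1 p.2 = 1)).card : ℝ))
      atTop (nhds (∫ y, f y ∂mu)) := by
  obtain ⟨C, hC⟩ := isCompact_univ.exists_bound_of_continuousOn hf.continuousOn
  have hbound : ∀ m n : ℕ, |f (T^[cardFactors (m ^ 2 + n ^ 2)] x)| ≤ C :=
    fun m n => (Real.norm_eq_abs _).symm.trans_le (hC _ (Set.mem_univ _))
  refine tendsto_coprimePairs_average (g := fun m n => f (T^[cardFactors (m ^ 2 + n ^ 2)] x))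
    hbound fun d hd => ?_
  refine (hknown (T^[2 * cardFactors d] x) f hf).congr fun M => ?_
  congr 1
  refine sum_congr rfl fun a ha => sum_congr rfl fun b _ => ?_
  have hab : a ^ 2 + b ^ 2 ≠ 0 := (Nat.add_pos_left (pow_pos (mem_Icc.1 ha).1 2) _).ne'
  rw [cardFactors_mul_sq_add_mul_sq hd hab, Function.iterate_add_apply]

theorem stmt8 {X : Type*} [MetricSpace X] [CompactSpace X]
    [MeasurableSpace X] [BorelSpace X]
    (T : X → X) (hT : IsHomeomorph T)
    (mu : Measure X) [IsProbabilityMeasure mu]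
    (hinv : MeasurePreserving T mu mu)
    (huniq : ∀ ν : Measure X, IsProbabilityMeasure ν → MeasurePreserving T ν ν → ν = mu)
    (hknown : ∀ (x : X) (f : X → ℝ), Continuous f →
      Tendsto (fun N : ℕ =>
          (∑ m ∈ Finset.Icc 1 N, ∑ n ∈ Finset.Icc 1 N,
            f (T^[cardFactors (m ^ 2 + n ^ 2)] x)) / (N : ℝ) ^ 2)
        atTop (nhds (∫ y, f y ∂mu)))
    (x : X) (f : X → ℝ) (hf : Continuous f) :
    Tendsto (fun N : ℕ =>
        (∑ p ∈ (Finset.Icc 1 N ×ˢ Finset.Icc 1 N).filter (fun p => Nat.gcd p.1 p.2 = 1),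
            f (T^[cardFactors (p.1 ^ 2 + p.2 ^ 2)] x)) /
          (((Finset.Icc 1 N ×ˢ Finset.Icc 1 N).filter
              (fun p => Nat.gcd p.1 p.2 = 1)).card : ℝ))
      atTop (nhds (∫ y, f y ∂mu)) :=
  stmt8_general T mu hknown x f hf
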